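/- arXiv:2205.12151 — 2 statements merged into one kernel-verified Lean document; each statement's English description precedes it below -/
import Mathlib

section
/- Let A be a commutative ring, ξ ∈ A, and consider B = A[u, t]/(u·t − ξ) with the ℤ-grading in which u has degree 2, t has degree −2, and A sits in degree 0. Then the odd-degree components of B vanish, the degree-0 component equals A, and for every k > 0 the degree-2k component is the free A-module generated by u^k while the degree-(−2k) component is the free A-module generated by t^k, provided ξ is a nonzerodivisor in A. -/
/-!
Every monomial `uⁱtʲ` reduces, via `ut = ξ`, to `ξʲ uⁱ⁻ʲ` or `ξⁱ tʲ⁻ⁱ`, so each even component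
is spanned by a single power of `u` or `t` (and `1` in degree `0`), while odd degrees contain no
monomials at all. These generators are torsion-free: `u ↦ T`, `t ↦ ξ T⁻¹` defines a map to the
Laurent polynomials `A[T, T⁻¹]`, sending `a • uᵏ` to `a Tᵏ` and `a • tᵏ` to `a ξᵏ T⁻ᵏ`, and the
latter vanishes only for `a = 0` because `ξ` is a nonzerodivisor.
-/

open MvPolynomial

open scoped nonZeroDivisors

section Monomials

variable {A B : Type*} [CommRing A] [CommRing B] [Algebra A B] {ξ : A} {u t : B}

lemma pow_add_mul_pow_eq_smul (hut : u * t = algebraMap A B ξ) (j k : ℕ) :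
    u ^ (j + k) * t ^ j = ξ ^ j • u ^ k := by
  rw [Algebra.smul_def, map_pow, ← hut]
  ring

lemma span_monomials_of_odd {δ : ℤ} (hδ : Odd δ) :
    Submodule.span A {x : B | ∃ i j : ℕ, 2 * (i : ℤ) - 2 * (j : ℤ) = δ ∧ x = u ^ i * t ^ j} =
      ⊥ := by
  obtain ⟨m, rfl⟩ := hδ
  refine Submodule.span_eq_bot.2 ?_
  rintro x ⟨i, j, hij, -⟩
  omega

lemma span_monomials_two_mul (hut : u * t = algebraMap A B ξ) (k : ℕ) :
    Submodule.span A
        {x : B | ∃ i j : ℕ, 2 * (i : ℤ) - 2 * (j : ℤ) = 2 * (k : ℤ) ∧ x = u ^ i * t ^ j} =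
      Submodule.span A {u ^ k} := by
  apply le_antisymm
  · rw [Submodule.span_le]
    rintro x ⟨i, j, hij, rfl⟩
    obtain rfl : i = j + k := by omega
    rw [pow_add_mul_pow_eq_smul hut]
    exact Submodule.smul_mem _ _ (Submodule.mem_span_singleton_self _)
  · exact Submodule.span_mono (Set.singleton_subset_iff.2 ⟨k, 0, by ring, by simp⟩)

lemma span_monomials_neg_two_mul (hut : u * t = algebraMap A B ξ) (k : ℕ) :
    Submodule.span A
        {x : B | ∃ i j : ℕ, 2 * (i : ℤ) - 2 * (j : ℤ) = -(2 * (k : ℤ)) ∧ x = u ^ i * t ^ j} =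
      Submodule.span A {t ^ k} := by
  rw [← span_monomials_two_mul (u := t) (t := u) (by rwa [mul_comm])]
  congr 1
  ext x
  constructor <;>
    · rintro ⟨i, j, hij, rfl⟩
      exact ⟨j, i, by omega, mul_comm _ _⟩

end Monomials

lemma mk_X_zero_mul_mk_X_one (A : Type*) [CommRing A] (ξ : A) :
    Ideal.Quotient.mk (Ideal.span {X 0 * X 1 - C ξ}) (X 0 : MvPolynomial (Fin 2) A) *
        Ideal.Quotient.mk _ (X 1) =
      algebraMap A _ ξ := by
  rw [← map_mul, ← Ideal.Quotient.mk_algebraMap, algebraMap_eq,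
    Ideal.Quotient.mk_eq_mk_iff_sub_mem]
  exact Ideal.subset_span rfl

section Laurent

open LaurentPolynomial

lemma LaurentPolynomial.eq_zero_of_C_mul_T_eq_zero {A : Type*} [Semiring A] {a : A} {n : ℤ}
    (h : LaurentPolynomial.C a * T n = 0) : a = 0 := by
  rwa [← single_eq_C_mul_T, AddMonoidAlgebra.single_eq_zero] at h

lemma eq_zero_of_smul_eq_zero_of_map_eq_C_mul_T {A B : Type*} [CommRing A] [CommRing B]
    [Algebra A B] (φ : B →ₐ[A] A[T;T⁻¹]) {x : B} {c : A} (hc : c ∈ A⁰) {n : ℤ}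
    (hx : φ x = LaurentPolynomial.C c * T n) {a : A} (h : a • x = 0) : a = 0 := by
  have hφ : LaurentPolynomial.C (a * c) * T n = 0 := by
    rw [map_mul, mul_assoc, ← hx, ← LaurentPolynomial.smul_eq_C_mul, ← map_smul, h, map_zero]
  exact (mul_right_mem_nonZeroDivisors_eq_zero_iff hc).1 (eq_zero_of_C_mul_T_eq_zero hφ)

variable (A : Type*) [CommRing A] (ξ : A)

noncomputable def quotientToLaurent :
    (MvPolynomial (Fin 2) A ⧸ Ideal.span {X 0 * X 1 - MvPolynomial.C ξ}) →ₐ[A] A[T;T⁻¹] :=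
  Ideal.Quotient.liftₐ _ (aeval ![T 1, LaurentPolynomial.C ξ * T (-1)]) fun p hp => by
    obtain ⟨q, rfl⟩ := Ideal.mem_span_singleton'.1 hp
    have hrel : T 1 * (LaurentPolynomial.C ξ * T (-1)) = LaurentPolynomial.C ξ := by
      rw [mul_left_comm, ← T_add, add_neg_cancel, T_zero, mul_one]
    simp [hrel, LaurentPolynomial.algebraMap_apply]

@[simp]
lemma quotientToLaurent_mk (p : MvPolynomial (Fin 2) A) :
    quotientToLaurent A ξ (Ideal.Quotient.mk _ p) =
      aeval ![T 1, LaurentPolynomial.C ξ * T (-1)] p :=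
  rfl

end Laurent

/-- The graded structure of `B = A[u,t]/(ut - ξ)` with `deg u = 2`,
`deg t = -2`: odd components vanish, the degree-0 component is `A`, and for
`k > 0` the degree `2k` (resp. `-2k`) component is free of rank one on `u^k`
(resp. `t^k`), provided `ξ` is a nonzerodivisor. -/
theorem graded_structure_of_ut_eq_xi
    (A : Type*) [CommRing A] (ξ : A)
    (hξ : ∀ x : A, ξ * x = 0 → x = 0)
    (I : Ideal (MvPolynomial (Fin 2) A))
    (hI : I = Ideal.span {(X 0 : MvPolynomial (Fin 2) A) * X 1 - C ξ})
    (U T : MvPolynomial (Fin 2) A ⧸ I)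
    (hU : U = Ideal.Quotient.mk I (X 0))
    (hT : T = Ideal.Quotient.mk I (X 1))
    (comp : ℤ → Submodule A (MvPolynomial (Fin 2) A ⧸ I))
    (hcomp : ∀ δ : ℤ, comp δ =
      Submodule.span A
        {x | ∃ i j : ℕ, 2 * (i : ℤ) - 2 * (j : ℤ) = δ ∧ x = U ^ i * T ^ j}) :
    (∀ δ : ℤ, Odd δ → comp δ = ⊥) ∧
    (comp 0 = LinearMap.range (Algebra.linearMap A (MvPolynomial (Fin 2) A ⧸ I)) ∧
      Function.Injective (algebraMap A (MvPolynomial (Fin 2) A ⧸ I))) ∧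
    (∀ k : ℕ, 0 < k →
      (comp (2 * (k : ℤ)) = Submodule.span A {U ^ k} ∧
        (∀ a : A, a • (U ^ k) = 0 → a = 0)) ∧
      (comp (-(2 * (k : ℤ))) = Submodule.span A {T ^ k} ∧
        (∀ a : A, a • (T ^ k) = 0 → a = 0))) := by
  subst hI
  simp only [hcomp]
  have hUT : U * T = algebraMap A _ ξ := hU ▸ hT ▸ mk_X_zero_mul_mk_X_one A ξ
  have hU_free (k : ℕ) (a : A) : a • U ^ k = 0 → a = 0 :=
    eq_zero_of_smul_eq_zero_of_map_eq_C_mul_T (quotientToLaurent A ξ) (one_mem _) (n := k)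
      (by simp [hU, LaurentPolynomial.T_pow])
  have hT_free (k : ℕ) (a : A) : a • T ^ k = 0 → a = 0 :=
    eq_zero_of_smul_eq_zero_of_map_eq_C_mul_T (quotientToLaurent A ξ)
      (pow_mem (mem_nonZeroDivisors_iff_left.2 hξ) k) (n := -k)
      (by simp [hT, mul_pow, LaurentPolynomial.T_pow])
  refine ⟨fun δ => span_monomials_of_odd, ⟨?_, ?_⟩, fun k _ =>
    ⟨⟨span_monomials_two_mul hUT k, hU_free k⟩, span_monomials_neg_two_mul hUT k, hT_free k⟩⟩
  · simpa [← Submodule.one_eq_span, Submodule.one_eq_range] using span_monomials_two_mul hUT 0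
  · refine (injective_iff_map_eq_zero _).2 fun a ha => hU_free 0 a ?_
    rwa [pow_zero, ← Algebra.algebraMap_eq_smul_one]
end

section
/- Let A be a commutative ring, a, b ∈ A with b a nonzerodivisor and a a nonzerodivisor modulo (b). Then there is a short exact sequence of A-modules 0 → A/(a) → A/(ab) → A/(b) → 0, where the first map is induced by multiplication by b and the second is the natural projection; moreover, for every d ≥ 1, the kernel of the composite of multiplication by a^d on A/(ab) with the projection A/(ab) → A/(b) is exactly the image of A/(a) under the first map. -/
/-- Transversality: for `b` a nonzerodivisor and `a` a nonzerodivisor mod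
`(b)`, there is a short exact sequence `0 → A/(a) → A/(ab) → A/(b) → 0`,
with the first map induced by multiplication by `b` and the second the
natural projection; and for every `d ≥ 1` the kernel of multiplication by
`a^d` from `A/(ab)` to `A/(b)` is exactly the image of `A/(a)`. -/
theorem transversal_ses_and_kernel
    (A : Type*) [CommRing A] (a b : A)
    (hb : ∀ x : A, b * x = 0 → x = 0)
    (ha : ∀ x : A, a * x ∈ Ideal.span {b} → x ∈ Ideal.span {b}) :
    ∃ (f : (A ⧸ Ideal.span {a}) →ₗ[A] (A ⧸ Ideal.span {a * b}))
      (g : (A ⧸ Ideal.span {a * b}) →ₗ[A] (A ⧸ Ideal.span {b})),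
      (∀ x : A, f (Ideal.Quotient.mk (Ideal.span {a}) x) =
          Ideal.Quotient.mk (Ideal.span {a * b}) (b * x)) ∧
      (∀ x : A, g (Ideal.Quotient.mk (Ideal.span {a * b}) x) =
          Ideal.Quotient.mk (Ideal.span {b}) x) ∧
      Function.Injective f ∧ Function.Surjective g ∧
      LinearMap.range f = LinearMap.ker g ∧
      (∀ d : ℕ, 1 ≤ d → ∀ x : A,
        Ideal.Quotient.mk (Ideal.span {b}) (a ^ d * x) = 0 ↔
          Ideal.Quotient.mk (Ideal.span {a * b}) x ∈ LinearMap.range f) := by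
  have hfker : (Ideal.span {a} : Ideal A) ≤
      LinearMap.ker ((Ideal.span {a * b}).mkQ.comp (LinearMap.lsmul A A b)) := by
    intro x hx
    rw [Ideal.mem_span_singleton] at hx
    obtain ⟨c, rfl⟩ := hx
    simp only [LinearMap.mem_ker, LinearMap.comp_apply, LinearMap.lsmul_apply,
      smul_eq_mul, Submodule.mkQ_apply, Submodule.Quotient.mk_eq_zero]
    rw [Ideal.mem_span_singleton]
    exact ⟨c, by ring⟩
  have hle : Ideal.span {a * b} ≤ Ideal.span {b} := by
    rw [Ideal.span_singleton_le_span_singleton]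
    exact ⟨a, mul_comm a b⟩
  have hgker : (Ideal.span {a * b} : Ideal A) ≤
      LinearMap.ker (Ideal.span {b} : Ideal A).mkQ := by
    intro x hx
    simpa using hle hx
  refine ⟨Submodule.liftQ _ _ hfker, Submodule.liftQ _ _ hgker, ?_, ?_, ?_, ?_, ?_, ?_⟩
  · intro x; rfl
  · intro x; rfl
  · -- injective
    rw [← LinearMap.ker_eq_bot, eq_bot_iff]
    intro y hy
    obtain ⟨x, rfl⟩ := Submodule.mkQ_surjective _ y
    have hy' : Ideal.Quotient.mk (Ideal.span {a * b}) (b * x) = 0 := hy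
    rw [Ideal.Quotient.eq_zero_iff_mem, Ideal.mem_span_singleton] at hy'
    obtain ⟨c, hc⟩ := hy'
    have h0 : b * (x - a * c) = 0 := by rw [mul_sub, hc]; ring
    have hx : x = a * c := sub_eq_zero.mp (hb _ h0)
    have : (Submodule.mkQ (Ideal.span {a})) x = 0 := by
      rw [Submodule.mkQ_apply, Submodule.Quotient.mk_eq_zero]
      exact Ideal.mem_span_singleton.mpr ⟨c, hx⟩
    simpa using this
  · -- surjective
    intro y
    obtain ⟨x, rfl⟩ := Submodule.mkQ_surjective _ y
    exact ⟨Submodule.Quotient.mk x, rfl⟩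
  · -- range = ker
    ext y
    obtain ⟨x, rfl⟩ := Submodule.mkQ_surjective _ y
    constructor
    · rintro ⟨z, hz⟩
      obtain ⟨w, rfl⟩ := Submodule.mkQ_surjective _ z
      rw [LinearMap.mem_ker, ← hz]
      show Ideal.Quotient.mk (Ideal.span {b}) (b * w) = 0
      rw [Ideal.Quotient.eq_zero_iff_mem, Ideal.mem_span_singleton]
      exact ⟨w, rfl⟩
    · intro hy
      have h1 : Ideal.Quotient.mk (Ideal.span {b}) x = 0 := hy
      rw [Ideal.Quotient.eq_zero_iff_mem, Ideal.mem_span_singleton] at h1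
      obtain ⟨c, rfl⟩ := h1
      exact ⟨Submodule.Quotient.mk c, rfl⟩
  · -- kernel of a^d
    intro d _ x
    have key : ∀ n : ℕ, a ^ n * x ∈ Ideal.span {b} → x ∈ Ideal.span {b} := by
      intro n
      induction n with
      | zero => simp
      | succ n ih =>
        intro h
        apply ih
        apply ha
        rwa [← mul_assoc, ← pow_succ']
    constructor
    · intro h
      rw [Ideal.Quotient.eq_zero_iff_mem] at h
      have hx : x ∈ Ideal.span {b} := key d h
      rw [Ideal.mem_span_singleton] at hx
      obtain ⟨c, rfl⟩ := hx
      exact ⟨Submodule.Quotient.mk c, rfl⟩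
    · rintro ⟨z, hz⟩
      obtain ⟨w, rfl⟩ := Submodule.mkQ_surjective _ z
      have hz' : Ideal.Quotient.mk (Ideal.span {a * b}) (b * w) =
          Ideal.Quotient.mk (Ideal.span {a * b}) x := hz
      rw [Ideal.Quotient.mk_eq_mk_iff_sub_mem] at hz'
      have h2 : b * w - x ∈ Ideal.span {b} := hle hz'
      have h3 : b * w ∈ Ideal.span {b} := Ideal.mem_span_singleton.mpr ⟨w, rfl⟩
      have hx : x ∈ Ideal.span {b} := by
        have := (Ideal.span {b}).sub_mem h3 h2
        simpa using this
      rw [Ideal.Quotient.eq_zero_iff_mem]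
      rw [Ideal.mem_span_singleton] at hx ⊢
      obtain ⟨c, rfl⟩ := hx
      exact ⟨a ^ d * c, by ring⟩
end
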